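/- arXiv:2010.14601 — 6 statements merged into one kernel-verified Lean document; each statement's English description precedes it below -/
import Mathlib

section
/- Let f : 𝔽_q → 𝔽_q be a map on a finite field 𝔽_q, and let S be the 𝔽_q-linear span of the set of compositional iterates {f^[i] : i ∈ ℕ} (where f^[0] = id) inside the space of functions 𝔽_q → 𝔽_q. Then S is invariant under the Koopman operator φ ↦ φ ∘ f, and f is a bijection of 𝔽_q if and only if the restriction of the map φ ↦ φ ∘ f to S is a bijection of S onto itself. -/
/-- Let `S` be the `𝔽_q`-linear span of the compositional iterates `f^[i]` of a map
`f : 𝔽_q → 𝔽_q` on a finite field. Then `S` is invariant under the Koopman operator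
`φ ↦ φ ∘ f`, and `f` is a bijection iff the restriction of `φ ↦ φ ∘ f` to `S`
is a bijection of `S` onto itself. -/
theorem stmt_1 {K : Type*} [Field K] [Fintype K] (f : K → K)
    (S : Submodule K (K → K))
    (hS : S = Submodule.span K (Set.range fun i : ℕ => f^[i])) :
    Set.MapsTo (fun φ : K → K => φ ∘ f) (S : Set (K → K)) (S : Set (K → K)) ∧
      (Function.Bijective f ↔
        Set.BijOn (fun φ : K → K => φ ∘ f) (S : Set (K → K)) (S : Set (K → K))) := by
  set T : (K → K) →ₗ[K] (K → K) := LinearMap.funLeft K K f with hT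
  have hmaps : ∀ x ∈ S, T x ∈ S := by
    intro x hx
    rw [hS] at hx ⊢
    have hle : Submodule.span K (Set.range fun i : ℕ => f^[i]) ≤
        (Submodule.span K (Set.range fun i : ℕ => f^[i])).comap T := by
      rw [Submodule.span_le]
      rintro _ ⟨i, rfl⟩
      have h1 : T f^[i] = f^[i+1] := by
        simp [hT, LinearMap.funLeft, Function.iterate_succ]
      exact Submodule.mem_comap.mpr (h1 ▸ Submodule.subset_span ⟨i + 1, rfl⟩)
    exact hle hx
  have hMapsTo : Set.MapsTo (fun φ : K → K => φ ∘ f) (S : Set (K → K)) (S : Set (K → K)) :=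
    fun x hx => hmaps x hx
  refine ⟨hMapsTo, ?_, ?_⟩
  · -- f bijective → BijOn
    intro hf
    have hTinj : Function.Injective T := by
      intro a b hab
      funext x
      have := congrFun hab (Function.invFun f x)
      simpa [hT, LinearMap.funLeft, Function.invFun_eq (hf.surjective x)] using this
    have hinjOn : Set.InjOn (fun φ : K → K => φ ∘ f) (S : Set (K → K)) :=
      fun a _ b _ h => hTinj h
    have hRinj : Function.Injective (T.restrict hmaps) := by
      intro a b hab
      exact Subtype.ext (hTinj (congrArg Subtype.val hab))
    have hRsurj : Function.Surjective (T.restrict hmaps) :=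
      (LinearMap.injective_iff_surjective).mp hRinj
    refine ⟨hMapsTo, hinjOn, ?_⟩
    intro y hy
    obtain ⟨⟨x, hx⟩, hxy⟩ := hRsurj ⟨y, hy⟩
    exact ⟨x, hx, congrArg Subtype.val hxy⟩
  · -- BijOn → f bijective
    intro hbij
    have hid : (id : K → K) ∈ S := by
      rw [hS]
      exact Submodule.subset_span ⟨0, rfl⟩
    obtain ⟨φ, hφS, hφ⟩ := hbij.surjOn hid
    have hfinj : Function.Injective f := by
      have hφ' : φ ∘ f = id := hφ
      have : Function.Injective (φ ∘ f) := by rw [hφ']; exact Function.injective_id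
      exact Function.Injective.of_comp this
    exact Finite.injective_iff_bijective.mp hfinj
end

section
/- Let f : 𝔽_q → 𝔽_q be a map on a finite field 𝔽_q and N ≥ 1. Suppose the functions f^[0] = id, f^[1], ..., f^[N-1] are linearly independent over 𝔽_q (as elements of the space of functions 𝔽_q → 𝔽_q), and that there exist coefficients α_0, ..., α_{N-1} ∈ 𝔽_q with f^[N](x) = Σ_{i=0}^{N-1} α_i · f^[i](x) for all x ∈ 𝔽_q. Then f is a bijection of 𝔽_q if and only if α_0 ≠ 0. -/
/-- If `id = f^[0], f^[1], …, f^[N-1]` are linearly independent functions on the finite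
field `𝔽_q` and `f^[N] = ∑_{i<N} α_i f^[i]`, then `f` is a bijection iff `α 0 ≠ 0`. -/
theorem stmt_2 {K : Type*} [Field K] [Fintype K] (f : K → K) (N : ℕ) (hN : 1 ≤ N)
    (α : ℕ → K)
    (hind : LinearIndependent K (fun i : Fin N => f^[(i : ℕ)]))
    (hrel : ∀ x : K, f^[N] x = ∑ i ∈ Finset.range N, α i * f^[i] x) :
    Function.Bijective f ↔ α 0 ≠ 0 := by
  obtain ⟨M, rfl⟩ : ∃ M, N = M + 1 := ⟨N - 1, (Nat.succ_pred_eq_of_pos hN).symm⟩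
  constructor
  · intro hbij h0
    -- derive relation among f^[0..M]
    have hrel' : ∀ x : K, f^[M] x = ∑ i ∈ Finset.range M, α (i + 1) * f^[i] x := by
      intro x
      obtain ⟨y, rfl⟩ := hbij.surjective x
      have := hrel y
      rw [Finset.sum_range_succ'] at this
      simp only [h0, zero_mul, add_zero] at this
      rw [Function.iterate_succ_apply] at this
      rw [this]
      apply Finset.sum_congr rfl
      intro i _
      rw [Function.iterate_succ_apply]
    -- contradiction with linear independence
    set c : Fin (M + 1) → K := fun i => if (i : ℕ) = M then 1 else -(α (i + 1)) with hc
    have hsum : ∑ i : Fin (M + 1), c i • f^[(i : ℕ)] = 0 := by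
      funext x
      simp only [Finset.sum_apply, Pi.zero_apply, Pi.smul_apply, smul_eq_mul]
      rw [Fin.sum_univ_castSucc]
      simp only [hc, Fin.val_last, if_pos rfl, Fin.coe_castSucc, one_mul]
      have hlt : ∀ i : Fin M, ((i : ℕ) = M) = False := by
        intro i; simp [Nat.ne_of_lt i.isLt]
      rw [Fin.sum_univ_eq_sum_range (fun i => (if i = M then (1:K) else -(α (i+1))) * f^[i] x)]
      have : ∑ i ∈ Finset.range M, (if i = M then (1:K) else -(α (i+1))) * f^[i] x
          = -∑ i ∈ Finset.range M, α (i + 1) * f^[i] x := by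
        rw [← Finset.sum_neg_distrib]
        apply Finset.sum_congr rfl
        intro i hi
        rw [if_neg (Nat.ne_of_lt (Finset.mem_range.mp hi))]
        ring
      rw [this, hrel' x]
      simp
    have := Fintype.linearIndependent_iff.mp hind c hsum (Fin.last M)
    simp [hc, Fin.val_last] at this
  · intro h0
    rw [Finite.injective_iff_bijective.symm]
    intro a b hab
    have hiter : ∀ i : ℕ, f^[i + 1] a = f^[i + 1] b := by
      intro i
      rw [Function.iterate_succ_apply, Function.iterate_succ_apply, hab]
    have ha := hrel a
    have hb := hrel b
    rw [Finset.sum_range_succ'] at ha hb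
    have hN1 : f^[M + 1] a = f^[M + 1] b := hiter M
    have hsum : ∑ i ∈ Finset.range M, α (i + 1) * f^[i + 1] a
        = ∑ i ∈ Finset.range M, α (i + 1) * f^[i + 1] b := by
      apply Finset.sum_congr rfl
      intro i _
      rw [hiter i]
    rw [ha, hb, hsum] at hN1
    simpa using mul_left_cancel₀ h0 (add_left_cancel hN1)
end

section
/- Let f : 𝔽_q → 𝔽_q be a map on a finite field 𝔽_q and N ≥ 1. Suppose there exist coefficients α_0, ..., α_{N-1} ∈ 𝔽_q with α_0 ≠ 0 such that f^[N](x) = Σ_{i=0}^{N-1} α_i · f^[i](x) for all x ∈ 𝔽_q. Define g : 𝔽_q → 𝔽_q by g(x) = Σ_{i=0}^{N-1} c_i · f^[i](x), where c_i = −α_{i+1}/α_0 for 0 ≤ i ≤ N−2 and c_{N−1} = α_0^{−1}. Then g ∘ f = id and f ∘ g = id; in particular f is a bijection and g is its inverse. -/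
/-!
Composing `g` with `f` shifts every iterate up by one. The top term `α₀⁻¹ f^[N]` is then
rewritten with the relation, and the coefficients `c_i` are chosen so that everything except
`α₀⁻¹ α₀ f^[0]` cancels; hence `g ∘ f = id`. On a finite set a map with a left inverse is
bijective, so `g` is also a right inverse.
-/

open Finset Function

theorem leftInverse_of_iterate_eq_sum {R V : Type*} [Field R] [AddCommGroup V] [Module R V]
    {f g : V → V} {N : ℕ} {α c : ℕ → R} (hα : α 0 ≠ 0)
    (hrel : ∀ x, f^[N] x = ∑ i ∈ range N, α i • f^[i] x)
    (hc : ∀ i, i + 1 < N → c i = -α (i + 1) / α 0) (hcN : c (N - 1) = (α 0)⁻¹)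
    (hg : ∀ x, g x = ∑ i ∈ range N, c i • f^[i] x) :
    LeftInverse g f := by
  intro x
  rcases N with _ | M
  · -- `N = 0` forces `V` to be trivial
    simp only [range_zero, sum_empty, iterate_zero_apply] at hrel
    exact (hrel _).trans (hrel x).symm
  have hcancel : ∀ i ∈ range M, c i • f^[i + 1] x + (α 0)⁻¹ • α (i + 1) • f^[i + 1] x = 0 := by
    intro i hi
    rw [hc i (by simpa using hi), smul_smul, ← add_smul, neg_div, div_eq_inv_mul, neg_add_cancel,
      zero_smul]
  simp only [Nat.add_sub_cancel] at hcN
  calc g (f x)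
      = ∑ i ∈ range M, c i • f^[i + 1] x + (α 0)⁻¹ • f^[M + 1] x := by
        simp only [hg, ← iterate_succ_apply, sum_range_succ, hcN]
    _ = ∑ i ∈ range M, (c i • f^[i + 1] x + (α 0)⁻¹ • α (i + 1) • f^[i + 1] x)
          + (α 0)⁻¹ • α 0 • x := by
        rw [hrel, sum_range_succ', smul_add, smul_sum, sum_add_distrib, add_assoc,
          iterate_zero_apply]
    _ = x := by rw [sum_eq_zero hcancel, zero_add, smul_smul, inv_mul_cancel₀ hα, one_smul]

theorem stmt_3_general {K : Type*} [Field K] [Fintype K] (f : K → K) (N : ℕ)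
    (α : ℕ → K) (hα : α 0 ≠ 0)
    (hrel : ∀ x : K, f^[N] x = ∑ i ∈ Finset.range N, α i * f^[i] x)
    (c : ℕ → K)
    (hc : ∀ i : ℕ, i + 1 < N → c i = -α (i + 1) / α 0)
    (hcN : c (N - 1) = (α 0)⁻¹)
    (g : K → K)
    (hg : ∀ x : K, g x = ∑ i ∈ Finset.range N, c i * f^[i] x) :
    g ∘ f = id ∧ f ∘ g = id := by
  have hgf : LeftInverse g f := leftInverse_of_iterate_eq_sum (R := K) hα hrel hc hcN hg
  have hf : Surjective f := Finite.surjective_of_injective hgf.injective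
  exact ⟨hgf.comp_eq_id, (hgf.rightInverse_of_surjective hf).comp_eq_id⟩

/-- If `f^[N] = ∑_{i<N} α_i f^[i]` with `α 0 ≠ 0`, then
`g = ∑_{i<N} c_i f^[i]` with `c_i = -α_{i+1}/α_0` for `i ≤ N-2` and
`c_{N-1} = α_0⁻¹` is a two-sided inverse of `f`. -/
theorem stmt_3 {K : Type*} [Field K] [Fintype K] (f : K → K) (N : ℕ) (hN : 1 ≤ N)
    (α : ℕ → K) (hα : α 0 ≠ 0)
    (hrel : ∀ x : K, f^[N] x = ∑ i ∈ Finset.range N, α i * f^[i] x)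
    (c : ℕ → K)
    (hc : ∀ i : ℕ, i + 1 < N → c i = -α (i + 1) / α 0)
    (hcN : c (N - 1) = (α 0)⁻¹)
    (g : K → K)
    (hg : ∀ x : K, g x = ∑ i ∈ Finset.range N, c i * f^[i] x) :
    g ∘ f = id ∧ f ∘ g = id :=
  stmt_3_general f N α hα hrel c hc hcN g hg
end

section
/- Let 𝔽_q be a finite field, n ≥ 1, and F : 𝔽_q^n → 𝔽_q^n a map. Let W be an 𝔽_q-subspace of the space of functions 𝔽_q^n → 𝔽_q such that (i) φ ∘ F ∈ W for every φ ∈ W, and (ii) every coordinate function χ_i (defined by χ_i(x) = x_i) belongs to W. Then F is a bijection of 𝔽_q^n if and only if the restriction of the Koopman operator φ ↦ φ ∘ F to W is a bijection of W onto itself. -/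
/-- Let `W` be an `𝔽_q`-subspace of functions `𝔽_q^n → 𝔽_q` which is invariant under
`φ ↦ φ ∘ F` and contains all coordinate functions. Then `F` is a bijection iff the
restriction of the Koopman operator to `W` is a bijection of `W` onto itself. -/
theorem stmt_7 {K : Type*} [Field K] [Fintype K] {n : ℕ} (hn : 1 ≤ n)
    (F : (Fin n → K) → (Fin n → K))
    (W : Submodule K ((Fin n → K) → K))
    (hinv : ∀ φ ∈ W, φ ∘ F ∈ W)
    (hχ : ∀ i : Fin n, (fun x : Fin n → K => x i) ∈ W) :
    Function.Bijective F ↔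
      Set.BijOn (fun φ : (Fin n → K) → K => φ ∘ F)
        (W : Set ((Fin n → K) → K)) (W : Set ((Fin n → K) → K)) := by
  constructor
  · intro hF
    have hmaps : Set.MapsTo (fun φ : (Fin n → K) → K => φ ∘ F) (W : Set _) (W : Set _) :=
      fun φ hφ => hinv φ hφ
    have hinj : Set.InjOn (fun φ : (Fin n → K) → K => φ ∘ F) (W : Set _) := by
      intro φ _ ψ _ h
      funext x
      obtain ⟨y, rfl⟩ := hF.2 x
      exact congrFun h y
    exact (Set.Finite.injOn_iff_bijOn_of_mapsTo (Set.toFinite _) hmaps).mp hinj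
  · intro hb
    have hinjF : Function.Injective F := by
      intro x y hxy
      funext i
      obtain ⟨φ, hφ, hφ'⟩ := hb.2.2 (hχ i)
      have hx := congrFun hφ' x
      have hy := congrFun hφ' y
      simp only [Function.comp_apply] at hx hy
      rw [← hx, ← hy, hxy]
    exact Finite.injective_iff_bijective.mp hinjF
end

section
/- Let 𝔽_q be a finite field, n ≥ 1, and F : 𝔽_q^n → 𝔽_q^n a bijection. Let W be an 𝔽_q-subspace of the space of functions 𝔽_q^n → 𝔽_q such that φ ∘ F ∈ W for every φ ∈ W, and such that every coordinate function χ_i belongs to W. Then for each i, the i-th coordinate function of the inverse map, χ_i ∘ F^{-1}, belongs to W. -/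
/-! A bijection `F` of a finite set has finite order as a permutation, so `F⁻¹` is an iterate
`F^[m - 1]` of `F`. Hence any set of functions closed under precomposition with `F` is also
closed under precomposition with `F⁻¹`. -/

open Function

theorem Function.Bijective.exists_iterate_eq_invFun {α : Type*} [Finite α] [Nonempty α]
    {f : α → α} (hf : Bijective f) : ∃ k, f^[k] = invFun f := by
  set e := Equiv.ofBijective f hf
  have hperiod : f^[orderOf e] = id := by
    rw [← Equiv.coe_ofBijective f hf, ← Equiv.Perm.coe_pow, pow_orderOf_eq_one]
    rfl
  refine ⟨orderOf e - 1, funext fun x => hf.injective ?_⟩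
  rw [invFun_eq (hf.surjective x), ← iterate_succ_apply' f, Nat.succ_eq_add_one,
    Nat.sub_add_cancel (orderOf_pos e), hperiod, id]

theorem comp_iterate_mem {α β : Type*} {f : α → α} {S : Set (α → β)}
    (hS : ∀ φ ∈ S, φ ∘ f ∈ S) (k : ℕ) {φ : α → β} (hφ : φ ∈ S) : φ ∘ f^[k] ∈ S := by
  induction k with
  | zero => exact hφ
  | succ k ih => simpa only [iterate_succ, comp_assoc] using hS _ ih

theorem comp_invFun_mem_of_bijective {α β : Type*} [Finite α] [Nonempty α] {f : α → α}
    (hf : Bijective f) {S : Set (α → β)} (hS : ∀ φ ∈ S, φ ∘ f ∈ S) {φ : α → β} (hφ : φ ∈ S) :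
    φ ∘ invFun f ∈ S := by
  obtain ⟨k, hk⟩ := hf.exists_iterate_eq_invFun
  exact hk ▸ comp_iterate_mem hS k hφ

theorem stmt_8_general {K : Type*} [Field K] [Fintype K] {n : ℕ}
    (F : (Fin n → K) → (Fin n → K)) (hF : Function.Bijective F)
    (W : Submodule K ((Fin n → K) → K))
    (hinv : ∀ φ ∈ W, φ ∘ F ∈ W)
    (hχ : ∀ i : Fin n, (fun x : Fin n → K => x i) ∈ W) :
    ∀ i : Fin n, (fun x : Fin n → K => x i) ∘ Function.invFun F ∈ W :=
  fun i => comp_invFun_mem_of_bijective (S := (W : Set ((Fin n → K) → K))) hF hinv (hχ i)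

/-- If `F : 𝔽_q^n → 𝔽_q^n` is a bijection and `W` is a subspace of functions invariant
under `φ ↦ φ ∘ F` containing all coordinate functions, then each coordinate function of
the inverse map, `χ_i ∘ F⁻¹`, also belongs to `W`. -/
theorem stmt_8 {K : Type*} [Field K] [Fintype K] {n : ℕ} (hn : 1 ≤ n)
    (F : (Fin n → K) → (Fin n → K)) (hF : Function.Bijective F)
    (W : Submodule K ((Fin n → K) → K))
    (hinv : ∀ φ ∈ W, φ ∘ F ∈ W)
    (hχ : ∀ i : Fin n, (fun x : Fin n → K => x i) ∈ W) :
    ∀ i : Fin n, (fun x : Fin n → K => x i) ∘ Function.invFun F ∈ W :=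
  stmt_8_general F hF W hinv hχ
end

section
/- Let 𝔽_q be a finite field, n ≥ 1, and F : 𝔽_q^n → 𝔽_q^n a bijection. Let W be an 𝔽_q-subspace of the space of functions 𝔽_q^n → 𝔽_q with φ ∘ F ∈ W for all φ ∈ W and containing all coordinate functions χ_i, and let ψ_1, ..., ψ_N be a basis of W. Let M be the N × N matrix over 𝔽_q determined by ψ_i ∘ F = Σ_j M_{ij} ψ_j for each i, and let v_i ∈ 𝔽_q^N be the coordinate vector of χ_i, i.e., χ_i = Σ_j (v_i)_j ψ_j. Then M is invertible and for each i the i-th coordinate function g_i = χ_i ∘ F^{-1} of the inverse map satisfies g_i = Σ_j (v_i^T M^{-1})_j ψ_j, i.e., g_i(x) = Σ_j (Σ_k (v_i)_k (M^{-1})_{kj}) ψ_j(x) for all x ∈ 𝔽_q^n. -/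
/-!
Surjectivity of `F` makes `φ ↦ φ ∘ F` injective, and linear independence of the `ψ j` transports
this to `c ↦ c ᵥ* M`, so `M` is invertible over a field. Then `∑ j (v ᵥ* M⁻¹) j ψ j ∘ F = ∑ j v j ψ j`,
and evaluating at `F⁻¹ x` gives the formula for the coordinates of the inverse map.
-/

open Matrix

section Koopman

variable {α ι K : Type*} [Fintype ι] {F : α → α} {ψ : ι → α → K}

theorem sum_mul_apply_comp_eq_sum_vecMul [CommSemiring K] {M : Matrix ι ι K}
    (hM : ∀ i, ψ i ∘ F = fun x => ∑ j, M i j * ψ j x) (c : ι → K) (y : α) :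
    ∑ i, c i * ψ i (F y) = ∑ j, (c ᵥ* M) j * ψ j y := by
  simp only [← Function.comp_apply (f := ψ _), hM, Finset.mul_sum, ← mul_assoc]
  rw [Finset.sum_comm]
  simp only [vecMul, dotProduct, Finset.sum_mul]

theorem vecMul_injective_of_koopman [CommSemiring K] {M : Matrix ι ι K}
    (hF : Function.Surjective F) (hψ : LinearIndependent K ψ)
    (hM : ∀ i, ψ i ∘ F = fun x => ∑ j, M i j * ψ j x) :
    Function.Injective M.vecMul := by
  intro c d hcd
  have hcomp : ∀ y, ∑ i, c i * ψ i (F y) = ∑ i, d i * ψ i (F y) := fun y => by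
    simp only [sum_mul_apply_comp_eq_sum_vecMul hM]
    exact congrArg (fun e : ι → K => ∑ j, e j * ψ j y) hcd
  refine funext (Fintype.linearIndependent_iffₛ.mp hψ c d (funext fun z => ?_))
  obtain ⟨y, rfl⟩ := hF z
  simpa only [Finset.sum_apply, Pi.smul_apply, smul_eq_mul] using hcomp y

theorem isUnit_of_koopman [Field K] [DecidableEq ι] {M : Matrix ι ι K}
    (hF : Function.Surjective F) (hψ : LinearIndependent K ψ)
    (hM : ∀ i, ψ i ∘ F = fun x => ∑ j, M i j * ψ j x) :
    IsUnit M :=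
  vecMul_injective_iff_isUnit.mp (vecMul_injective_of_koopman hF hψ hM)

theorem sum_vecMul_inv_mul_apply_of_koopman [Nonempty α] [CommRing K] [DecidableEq ι] {M : Matrix ι ι K}
    (hF : Function.Surjective F) (hM : ∀ i, ψ i ∘ F = fun x => ∑ j, M i j * ψ j x)
    (hMu : IsUnit M) (v : ι → K) (x : α) :
    ∑ j, (v ᵥ* M⁻¹) j * ψ j x = ∑ j, v j * ψ j (Function.invFun F x) := by
  have hMM : M⁻¹ * M = 1 := nonsing_inv_mul M ((isUnit_iff_isUnit_det M).mp hMu)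
  conv_lhs => rw [← Function.rightInverse_invFun hF x]
  rw [sum_mul_apply_comp_eq_sum_vecMul hM, vecMul_vecMul, hMM, vecMul_one]

end Koopman

theorem stmt_9_general {K : Type*} [Field K] {n : ℕ}
    (F : (Fin n → K) → (Fin n → K)) (hF : Function.Bijective F)
    (N : ℕ) (ψ : Fin N → ((Fin n → K) → K))
    (hψ_indep : LinearIndependent K ψ)
    (M : Matrix (Fin N) (Fin N) K)
    (hM : ∀ i : Fin N, ψ i ∘ F = fun x => ∑ j : Fin N, M i j * ψ j x)
    (v : Fin n → Fin N → K)
    (hv : ∀ i : Fin n, (fun x : Fin n → K => x i) = fun x => ∑ j : Fin N, v i j * ψ j x) :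
    IsUnit M ∧
      ∀ (i : Fin n) (x : Fin n → K),
        Function.invFun F x i = ∑ j : Fin N, (∑ k : Fin N, v i k * M⁻¹ k j) * ψ j x := by
  have hMu : IsUnit M := isUnit_of_koopman hF.2 hψ_indep hM
  refine ⟨hMu, fun i x => ?_⟩
  rw [congrFun (hv i) (Function.invFun F x)]
  exact (sum_vecMul_inv_mul_apply_of_koopman hF.2 hM hMu (v i) x).symm

/-- Let `F : 𝔽_q^n → 𝔽_q^n` be a bijection, `W` an `F*`-invariant subspace of functions
containing all coordinate functions, with basis `ψ_1, …, ψ_N`. If `M` represents the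
reduced Koopman operator (`ψ_i ∘ F = ∑_j M_{ij} ψ_j`) and `v_i` is the coordinate vector
of `χ_i`, then `M` is invertible and the `i`-th coordinate function of `F⁻¹` is
`∑_j (v_iᵀ M⁻¹)_j ψ_j`. -/
theorem stmt_9 {K : Type*} [Field K] [Fintype K] {n : ℕ} (hn : 1 ≤ n)
    (F : (Fin n → K) → (Fin n → K)) (hF : Function.Bijective F)
    (W : Submodule K ((Fin n → K) → K))
    (hinv : ∀ φ ∈ W, φ ∘ F ∈ W)
    (hχ : ∀ i : Fin n, (fun x : Fin n → K => x i) ∈ W)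
    (N : ℕ) (ψ : Fin N → ((Fin n → K) → K))
    (hψ_indep : LinearIndependent K ψ)
    (hψ_span : Submodule.span K (Set.range ψ) = W)
    (M : Matrix (Fin N) (Fin N) K)
    (hM : ∀ i : Fin N, ψ i ∘ F = fun x => ∑ j : Fin N, M i j * ψ j x)
    (v : Fin n → Fin N → K)
    (hv : ∀ i : Fin n, (fun x : Fin n → K => x i) = fun x => ∑ j : Fin N, v i j * ψ j x) :
    IsUnit M ∧
      ∀ (i : Fin n) (x : Fin n → K),
        Function.invFun F x i = ∑ j : Fin N, (∑ k : Fin N, v i k * M⁻¹ k j) * ψ j x :=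
  stmt_9_general F hF N ψ hψ_indep M hM v hv
end
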